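/- arXiv:2112.06090 — 2 statements merged into one kernel-verified Lean document; each statement's English description precedes it below -/
import Mathlib

section
/- Let H be a measurable group and let μ be a probability measure on H with μ({e}) > 0, where e is the identity element. Then the total variation norm ‖μ^n − μ^{n+1}‖ tends to 0 as n → ∞. -/
open MeasureTheory Filter Topology

/-- The `n`-fold convolution power of a measure on a measurable group,
with `μ^0` the Dirac mass at the identity. -/
noncomputable def convPow {H : Type*} [Group H] [MeasurableSpace H]
    (μ : Measure H) : ℕ → Measure H
  | 0 => Measure.dirac 1
  | n + 1 => (convPow μ n).mconv μ

instance convPow.isProbabilityMeasure {H : Type*} [Group H] [MeasurableSpace H]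
    [MeasurableMul₂ H] (μ : Measure H) [IsProbabilityMeasure μ] :
    ∀ n, IsProbabilityMeasure (convPow μ n)
  | 0 => by rw [convPow]; infer_instance
  | n + 1 => by
      rw [convPow]
      have := convPow.isProbabilityMeasure μ n
      infer_instance

open Finset
open scoped NNReal ENNReal

/-!
Split off half of the atom at the identity (half, so that the remainder is never zero):
`μ = p • δ₁ + q • ν` with `p, q > 0` and `ν` a probability measure. As `δ₁` is the unit for
convolution, `μ^n = ∑ⱼ C(n,j) p^(n-j) q^j ν^j`, so `‖μ^n - μ^(n+1)‖` is at most the `ℓ¹` distance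
between the binomial weights `b(n, ·)` and `b(n+1, ·)`. By Pascal's rule this distance is
`q ∑ⱼ |b(n,j+1) - b(n,j)|`, which telescopes to `2q maxⱼ b(n,j)` because the weights are unimodal.
Finally the maximum tends to `0`: over the `w` indices following the mode the ratio of
consecutive weights is at least `1 - w/(npq)`, so for large `n` these `w` weights, which sum to at
most `1`, are all at least half the maximum, and the maximum is at most `2/w`.
-/

noncomputable def binomialWeight {R : Type*} [CommSemiring R] (p q : R) (n j : ℕ) : R :=
  n.choose j * p ^ (n - j) * q ^ j

section CommSemiring

variable {R : Type*} [CommSemiring R] (p q : R)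

lemma binomialWeight_of_lt {n j : ℕ} (h : n < j) : binomialWeight p q n j = 0 := by
  simp [binomialWeight, Nat.choose_eq_zero_of_lt h]

lemma binomialWeight_succ_zero (n : ℕ) :
    binomialWeight p q (n + 1) 0 = p * binomialWeight p q n 0 := by
  simp [binomialWeight, pow_succ, mul_comm]

lemma binomialWeight_succ_succ (n j : ℕ) :
    binomialWeight p q (n + 1) (j + 1) =
      p * binomialWeight p q n (j + 1) + q * binomialWeight p q n j := by
  simp only [binomialWeight, Nat.choose_succ_succ', Nat.add_sub_add_right, Nat.cast_add]
  rcases lt_or_ge j n with h | h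
  · obtain ⟨k, rfl⟩ : ∃ k, n = j + 1 + k := ⟨n - (j + 1), by omega⟩
    rw [show j + 1 + k - j = k + 1 by omega, show j + 1 + k - (j + 1) = k by omega]
    ring
  · rw [Nat.choose_eq_zero_of_lt (Nat.lt_succ_of_le h), Nat.sub_eq_zero_of_le h]
    ring

lemma sum_range_binomialWeight (hpq : p + q = 1) (n : ℕ) :
    ∑ j ∈ range (n + 1), binomialWeight p q n j = 1 := by
  have h := add_pow q p n
  rw [add_comm, hpq, one_pow] at h
  rw [h]
  refine sum_congr rfl fun j _ => ?_
  simp only [binomialWeight]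
  ring

lemma sum_range_binomialWeight_smul_add_smul {E : Type*} [AddCommMonoid E] [Module R E]
    (f : ℕ → E) (n : ℕ) :
    ∑ j ∈ range (n + 1), binomialWeight p q n j • (p • f j + q • f (j + 1)) =
      ∑ j ∈ range (n + 2), binomialWeight p q (n + 1) j • f j := by
  have hshift : ∑ j ∈ range (n + 1), binomialWeight p q n j • p • f j =
      ∑ j ∈ range (n + 1), (p * binomialWeight p q n (j + 1)) • f (j + 1) +
        (p * binomialWeight p q n 0) • f 0 := by
    rw [sum_range_succ (fun j => (p * binomialWeight p q n (j + 1)) • f (j + 1)),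
      binomialWeight_of_lt p q n.lt_succ_self, mul_zero, zero_smul, add_zero,
      sum_range_succ' (fun j => binomialWeight p q n j • p • f j)]
    simp only [smul_smul, mul_comm]
  rw [sum_range_succ' _ (n + 1)]
  simp only [smul_add, sum_add_distrib]
  rw [hshift]
  simp only [binomialWeight_succ_succ, binomialWeight_succ_zero, add_smul, smul_smul,
    sum_add_distrib, mul_comm q]
  abel

end CommSemiring

lemma NNReal.coe_binomialWeight (p q : ℝ≥0) (n j : ℕ) :
    ((binomialWeight p q n j : ℝ≥0) : ℝ) = binomialWeight (p : ℝ) q n j := by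
  simp [binomialWeight]

lemma sum_range_abs_sub_of_unimodal (g : ℕ → ℝ) {m N : ℕ} (hmN : m ≤ N)
    (hup : ∀ i < m, g i ≤ g (i + 1)) (hdown : ∀ i, m ≤ i → g (i + 1) ≤ g i) :
    ∑ i ∈ range N, |g (i + 1) - g i| = 2 * g m - g 0 - g N := by
  rw [← sum_range_add_sum_Ico _ hmN]
  have hleft : ∑ i ∈ range m, |g (i + 1) - g i| = g m - g 0 := by
    rw [← sum_range_sub g m]
    exact sum_congr rfl fun i hi => abs_of_nonneg (sub_nonneg.2 (hup i (mem_range.1 hi)))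
  have hright : ∑ i ∈ Ico m N, |g (i + 1) - g i| = g m - g N := by
    rw [← neg_sub, ← sum_Ico_sub g hmN, ← sum_neg_distrib]
    refine sum_congr rfl fun i hi => abs_of_nonpos (sub_nonpos.2 (hdown i (mem_Ico.1 hi).1))
  rw [hleft, hright]
  ring

lemma le_sum_range_of_mul_one_sub_le (g : ℕ → ℝ) {x : ℝ} (hx₀ : 0 ≤ x) (hx₁ : x ≤ 1)
    (hg : 0 ≤ g 0) {w : ℕ} (hstep : ∀ i < w, g i * (1 - x) ≤ g (i + 1)) :
    w * (g 0 * (1 - w * x)) ≤ ∑ i ∈ range w, g i := by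
  have hgeom : ∀ i ≤ w, g 0 * (1 - x) ^ i ≤ g i := by
    intro i hi
    induction i with
    | zero => simp
    | succ i ih =>
      calc g 0 * (1 - x) ^ (i + 1) = g 0 * (1 - x) ^ i * (1 - x) := by ring
        _ ≤ g i * (1 - x) := mul_le_mul_of_nonneg_right (ih (by omega)) (by linarith)
        _ ≤ g (i + 1) := hstep i (by omega)
  have hbound : ∀ i ∈ range w, g 0 * (1 - w * x) ≤ g i := by
    intro i hi
    have hi := mem_range.1 hi
    have hbern := one_add_mul_le_pow (a := -x) (by linarith) i
    calc g 0 * (1 - w * x) ≤ g 0 * (1 + i * -x) := by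
          gcongr; nlinarith [(Nat.cast_le (α := ℝ)).2 hi.le]
      _ ≤ g 0 * (1 - x) ^ i := by gcongr; simpa [sub_eq_add_neg] using hbern
      _ ≤ g i := hgeom i hi.le
  simpa using card_nsmul_le_sum (range w) g _ hbound

lemma binomialWeight_nonneg {R : Type*} [CommSemiring R] [PartialOrder R] [IsOrderedRing R]
    {p q : R} (hp : 0 ≤ p) (hq : 0 ≤ q) (n j : ℕ) : 0 ≤ binomialWeight p q n j := by
  unfold binomialWeight; positivity

lemma binomialWeight_succ_mul {R : Type*} [CommRing R] (p q : R) (n j : ℕ) :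
    binomialWeight p q n (j + 1) * ((j + 1) * p) = binomialWeight p q n j * ((n - j) * q) := by
  rcases lt_or_ge j n with h | h
  · have hch := congrArg (Nat.cast (R := R)) (Nat.choose_succ_right_eq n j)
    rw [Nat.cast_mul, Nat.cast_mul, Nat.cast_sub h.le] at hch
    obtain ⟨k, rfl⟩ : ∃ k, n = j + 1 + k := ⟨n - (j + 1), by omega⟩
    simp only [binomialWeight, show j + 1 + k - j = k + 1 by omega,
      show j + 1 + k - (j + 1) = k by omega] at hch ⊢
    push_cast at hch ⊢
    linear_combination p ^ k * p * q ^ j * q * hch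
  · rw [binomialWeight_of_lt p q (Nat.lt_succ_of_le h)]
    rcases h.eq_or_lt with rfl | h
    · simp
    · simp [binomialWeight_of_lt p q h]

section Real

variable {p q : ℝ} (hp : 0 < p) (hq : 0 < q) (hpq : p + q = 1)
include hp hq hpq

lemma binomialWeight_le_succ_of_lt_floor {n j : ℕ} (hj : j < ⌊(n + 1) * q⌋₊) :
    binomialWeight p q n j ≤ binomialWeight p q n (j + 1) := by
  have hjq : (j : ℝ) + 1 ≤ (n + 1) * q := by
    exact_mod_cast (Nat.le_floor_iff (by positivity)).1 hj
  refine le_of_mul_le_mul_right ?_ (by positivity : 0 < ((j : ℝ) + 1) * p)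
  rw [binomialWeight_succ_mul]
  refine mul_le_mul_of_nonneg_left ?_ (binomialWeight_nonneg hp.le hq.le n j)
  linear_combination ((j : ℝ) + 1) * hpq + hjq

lemma binomialWeight_succ_le_of_floor_le {n j : ℕ} (hj : ⌊(n + 1) * q⌋₊ ≤ j) :
    binomialWeight p q n (j + 1) ≤ binomialWeight p q n j := by
  have hjq : (n + 1) * q < (j : ℝ) + 1 := by
    have := Nat.lt_floor_add_one ((n + 1) * q)
    exact this.trans_le (by exact_mod_cast Nat.succ_le_succ hj)
  refine le_of_mul_le_mul_right ?_ (by positivity : 0 < ((j : ℝ) + 1) * p)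
  rw [binomialWeight_succ_mul]
  refine mul_le_mul_of_nonneg_left ?_ (binomialWeight_nonneg hp.le hq.le n j)
  linear_combination (-(j : ℝ) - 1) * hpq + hjq

lemma sum_range_abs_binomialWeight_sub_succ (n : ℕ) :
    ∑ j ∈ range (n + 2), |binomialWeight p q n j - binomialWeight p q (n + 1) j| =
      2 * q * binomialWeight p q n ⌊(n + 1) * q⌋₊ := by
  have hmode : ⌊(n + 1) * q⌋₊ ≤ n + 1 := by
    refine Nat.floor_le_of_le ?_
    push_cast
    nlinarith
  have hshape := sum_range_abs_sub_of_unimodal (binomialWeight p q n) hmode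
    (fun i hi => binomialWeight_le_succ_of_lt_floor hp hq hpq hi)
    (fun i hi => binomialWeight_succ_le_of_floor_le hp hq hpq hi)
  have hterm : ∀ j, |binomialWeight p q n (j + 1) - binomialWeight p q (n + 1) (j + 1)| =
      q * |binomialWeight p q n (j + 1) - binomialWeight p q n j| := by
    intro j
    rw [binomialWeight_succ_succ, ← abs_of_pos hq, ← abs_mul, abs_of_pos hq]
    congr 1
    linear_combination -binomialWeight p q n (j + 1) * hpq
  rw [sum_range_succ', binomialWeight_succ_zero]
  simp only [hterm, ← mul_sum, hshape, binomialWeight_of_lt p q n.lt_succ_self]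
  rw [show binomialWeight p q n 0 - p * binomialWeight p q n 0 = q * binomialWeight p q n 0 by
    linear_combination -binomialWeight p q n 0 * hpq,
    abs_of_nonneg (mul_nonneg hq.le (binomialWeight_nonneg hp.le hq.le n 0))]
  ring

lemma sum_range_binomialWeight_le_one (n N : ℕ) : ∑ j ∈ range N, binomialWeight p q n j ≤ 1 :=
  calc ∑ j ∈ range N, binomialWeight p q n j
      ≤ ∑ j ∈ range (N + (n + 1)), binomialWeight p q n j :=
        sum_le_sum_of_subset_of_nonneg (range_subset_range.2 (by omega))
          fun j _ _ => binomialWeight_nonneg hp.le hq.le n j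
    _ = ∑ j ∈ range (n + 1), binomialWeight p q n j := by
        refine (sum_subset (range_subset_range.2 (by omega)) fun j _ hj => ?_).symm
        exact binomialWeight_of_lt p q (by simpa using hj)
    _ = 1 := sum_range_binomialWeight p q hpq n

lemma mul_binomialWeight_floor_le (n w : ℕ) (hw : (w : ℝ) ≤ (n + 1) * p * q) :
    w * (binomialWeight p q n ⌊(n + 1) * q⌋₊ * (1 - w * (w / ((n + 1) * p * q)))) ≤ 1 := by
  set m := ⌊(n + 1) * q⌋₊
  set x := (w : ℝ) / ((n + 1) * p * q)
  have hpos : 0 < ((n : ℝ) + 1) * p * q := by positivity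
  have hxw : x * ((n + 1) * p * q) = w := div_mul_cancel₀ _ hpos.ne'
  have hm : (m : ℝ) ≤ (n + 1) * q := Nat.floor_le (by positivity)
  have hm' : (n + 1) * q < (m : ℝ) + 1 := Nat.lt_floor_add_one _
  have hx₀ : 0 ≤ x := by positivity
  have hstep : ∀ i < w, binomialWeight p q n (m + i) * (1 - x) ≤
      binomialWeight p q n (m + i + 1) := by
    intro i hi
    have hiw : (i : ℝ) + 1 ≤ w := by exact_mod_cast hi
    have hdrift : x * ((n + 1) * q) * p ≤ x * ((m + i : ℕ) + 1) * p := by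
      gcongr
      push_cast
      linarith [(Nat.cast_nonneg i : (0 : ℝ) ≤ i)]
    refine le_of_mul_le_mul_right ?_ (by positivity : 0 < ((m + i : ℕ) + 1 : ℝ) * p)
    rw [binomialWeight_succ_mul, mul_assoc]
    refine mul_le_mul_of_nonneg_left ?_ (binomialWeight_nonneg hp.le hq.le n _)
    push_cast at hdrift ⊢
    -- `(n - j) q = (j + 1) p - (j + 1 - (n + 1) q)` and `j + 1 - (n + 1) q ≤ w ≤ x (j + 1) p`
    nlinarith
  have hsum : ∑ i ∈ range w, binomialWeight p q n (m + i) ≤ 1 := by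
    have := sum_range_binomialWeight_le_one hp hq hpq n (m + w)
    rw [sum_range_add] at this
    linarith [sum_nonneg fun j (_ : j ∈ range m) => binomialWeight_nonneg hp.le hq.le n j]
  refine le_trans ?_ hsum
  exact le_sum_range_of_mul_one_sub_le (fun i => binomialWeight p q n (m + i)) hx₀
    ((div_le_one hpos).2 hw) (binomialWeight_nonneg hp.le hq.le n m) hstep

lemma tendsto_binomialWeight_floor :
    Tendsto (fun n : ℕ => binomialWeight p q n ⌊(n + 1) * q⌋₊) atTop (𝓝 0) := by
  refine tendsto_order.2 ⟨fun a ha => .of_forall fun n =>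
    ha.trans_le (binomialWeight_nonneg hp.le hq.le n _), fun ε hε => ?_⟩
  obtain ⟨w, hw⟩ := exists_nat_gt (2 / ε)
  have hw₀ : (0 : ℝ) < w := (by positivity : (0 : ℝ) < 2 / ε).trans hw
  have hw₁ : (1 : ℝ) ≤ w := by exact_mod_cast (Nat.cast_pos.1 hw₀ : 0 < w)
  have hlarge : ∀ᶠ n : ℕ in atTop, 2 * (w * w) ≤ ((n : ℝ) + 1) * p * q :=
    (((tendsto_natCast_atTop_atTop.atTop_add tendsto_const_nhds).atTop_mul_const hp
      ).atTop_mul_const hq).eventually_ge_atTop _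
  filter_upwards [hlarge] with n hn
  have hpos : 0 < ((n : ℝ) + 1) * p * q := by positivity
  have hbound := mul_binomialWeight_floor_le hp hq hpq n w (by nlinarith)
  have hhalf : (w : ℝ) * (w / ((n + 1) * p * q)) ≤ 1 / 2 := by
    rw [← mul_div_assoc, div_le_iff₀ hpos]
    linarith
  have hb := binomialWeight_nonneg hp.le hq.le n ⌊(n + 1) * q⌋₊
  have : binomialWeight p q n ⌊(n + 1) * q⌋₊ ≤ 2 / w := by
    rw [le_div_iff₀ hw₀]
    nlinarith
  exact this.trans_lt ((div_lt_iff₀ hw₀).2 (by rwa [div_lt_iff₀ hε, mul_comm] at hw))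

lemma tendsto_sum_range_abs_binomialWeight_sub_succ :
    Tendsto (fun n => ∑ j ∈ range (n + 2), |binomialWeight p q n j - binomialWeight p q (n + 1) j|)
      atTop (𝓝 0) := by
  simpa [sum_range_abs_binomialWeight_sub_succ hp hq hpq] using
    (tendsto_binomialWeight_floor hp hq hpq).const_mul (2 * q)

end Real

section Convolution

variable {M : Type*} [Monoid M] [MeasurableSpace M]

lemma Measure.nnreal_smul_mconv (c : ℝ≥0) (μ ν : Measure M) [SFinite ν] :
    (c • μ) ∗ₘ ν = c • (μ ∗ₘ ν) := by
  rw [ENNReal.smul_def, Measure.mconv_smul_left, ← ENNReal.smul_def]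

lemma Measure.mconv_nnreal_smul (c : ℝ≥0) (μ ν : Measure M) [SFinite ν] :
    μ ∗ₘ (c • ν) = c • (μ ∗ₘ ν) := by
  rw [ENNReal.smul_def, Measure.mconv_smul_right, ← ENNReal.smul_def]

lemma Measure.finsetSum_mconv [MeasurableMul₂ M] {ι : Type*} (s : Finset ι) (μ : ι → Measure M)
    [∀ i, IsFiniteMeasure (μ i)] (ν : Measure M) [SFinite ν] :
    (∑ i ∈ s, μ i) ∗ₘ ν = ∑ i ∈ s, μ i ∗ₘ ν := by
  classical
  induction s using Finset.induction_on with
  | empty => simp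
  | insert i s hi ih => rw [sum_insert hi, sum_insert hi, Measure.add_mconv, ih]

end Convolution

lemma convPow_smul_dirac_add_smul {H : Type*} [Group H] [MeasurableSpace H] [MeasurableMul₂ H]
    (p q : ℝ≥0) (ν : Measure H) [IsProbabilityMeasure ν] (n : ℕ) :
    convPow (p • Measure.dirac 1 + q • ν) n =
      ∑ j ∈ range (n + 1), binomialWeight p q n j • convPow ν j := by
  induction n with
  | zero => simp [convPow, binomialWeight]
  | succ n ih =>
    have hstep : ∀ j, convPow ν j ∗ₘ (p • Measure.dirac 1 + q • ν) =
        p • convPow ν j + q • convPow ν (j + 1) := fun j => by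
      rw [Measure.mconv_add, Measure.mconv_nnreal_smul, Measure.mconv_nnreal_smul,
        Measure.mconv_dirac_one]
      rfl
    rw [convPow, ih, Measure.finsetSum_mconv]
    simp only [Measure.nnreal_smul_mconv, hstep]
    exact sum_range_binomialWeight_smul_add_smul p q (convPow ν) n

section Decomposition

variable {X : Type*} [MeasurableSpace X]

lemma exists_eq_smul_dirac_add_smul (μ : Measure X) [IsProbabilityMeasure μ] {x : X}
    (hx : 0 < μ {x}) :
    ∃ (p q : ℝ≥0) (ν : Measure X), IsProbabilityMeasure ν ∧ 0 < p ∧ 0 < q ∧ p + q = 1 ∧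
      μ = p • Measure.dirac x + q • ν := by
  set p : ℝ≥0 := (μ {x}).toNNReal / 2
  have hp : 0 < p := div_pos (ENNReal.toNNReal_pos hx.ne' (measure_ne_top _ _)) two_pos
  have hp₁ : p < 1 := by
    have : (μ {x}).toNNReal ≤ 1 := by
      simpa using ENNReal.toNNReal_mono ENNReal.one_ne_top prob_le_one
    rw [div_lt_one two_pos]
    exact this.trans_lt one_lt_two
  set q : ℝ≥0 := 1 - p
  have hq : 0 < q := tsub_pos_of_lt hp₁
  have hpq : p + q = 1 := add_tsub_cancel_of_le hp₁.le
  have hle : p • Measure.dirac x ≤ μ := by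
    refine Measure.le_iff.2 fun s hs => ?_
    rw [Measure.smul_apply, Measure.nnreal_smul_coe_apply, Measure.dirac_apply' _ hs]
    by_cases hxs : x ∈ s
    · rw [Set.indicator_of_mem hxs, Pi.one_apply, mul_one]
      calc (p : ℝ≥0∞) ≤ (μ {x}).toNNReal := ENNReal.coe_le_coe.2 (half_le_self zero_le)
        _ ≤ μ {x} := ENNReal.coe_toNNReal_le_self
        _ ≤ μ s := measure_mono (Set.singleton_subset_iff.2 hxs)
    · simp [hxs]
  set ν : Measure X := q⁻¹ • (μ - p • Measure.dirac x)
  have hqν : q • ν = μ - p • Measure.dirac x := by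
    rw [smul_smul, mul_inv_cancel₀ hq.ne', one_smul]
  refine ⟨p, q, ν, ⟨?_⟩, hp, hq, hpq, ?_⟩
  · rw [Measure.smul_apply, Measure.nnreal_smul_coe_apply, Measure.sub_apply .univ hle,
      measure_univ, Measure.smul_apply, Measure.nnreal_smul_coe_apply, measure_univ, mul_one,
      ← ENNReal.coe_one, ← ENNReal.coe_sub, ← ENNReal.coe_mul, inv_mul_cancel₀ hq.ne',
      ENNReal.coe_one]
  · rw [hqν, add_comm, Measure.sub_add_cancel_of_le hle]

end Decomposition

lemma totalVariation_sub_le_of_eq_sum {X ι : Type*} [MeasurableSpace X] (s : Finset ι)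
    (ρ : ι → Measure X) [∀ i, IsFiniteMeasure (ρ i)] (a b : ι → ℝ≥0)
    (μ₁ μ₂ : Measure X) [IsFiniteMeasure μ₁] [IsFiniteMeasure μ₂]
    (h₁ : μ₁ = ∑ i ∈ s, a i • ρ i) (h₂ : μ₂ = ∑ i ∈ s, b i • ρ i) :
    (μ₁.toSignedMeasure - μ₂.toSignedMeasure).totalVariation ≤ ∑ i ∈ s, nndist (a i) (b i) • ρ i := by
  rw [SignedMeasure.totalVariation_eq_variation]
  refine VectorMeasure.variation_le_of_forall_enorm_le fun E hE => ?_
  have hreal : ∀ (c : ι → ℝ≥0) (μ : Measure X) [IsFiniteMeasure μ], μ = ∑ i ∈ s, c i • ρ i →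
      μ.toSignedMeasure E = ∑ i ∈ s, (c i : ℝ) * (ρ i).real E := by
    intro c μ _ hμ
    rw [Measure.toSignedMeasure_apply_measurable hE, hμ, measureReal_def, Measure.coe_finsetSum,
      Finset.sum_apply, ENNReal.toReal_sum fun i _ => by finiteness]
    simp [measureReal_def]
  rw [sub_apply, hreal a μ₁ h₁, hreal b μ₂ h₂, ← sum_sub_distrib, Measure.coe_finsetSum,
    Finset.sum_apply]
  refine (enorm_sum_le _ _).trans (sum_le_sum fun i _ => ?_)
  rw [← sub_mul, enorm_mul, ← edist_eq_enorm_sub, Real.enorm_of_nonneg measureReal_nonneg,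
    measureReal_def, ENNReal.ofReal_toReal (measure_ne_top _ _), Measure.smul_apply,
    Measure.nnreal_smul_coe_apply, edist_nndist]
  exact le_rfl

/-- If `H` is a measurable group and `μ` a probability measure on `H` with `μ({e}) > 0`, then
the total variation norm `‖μ^n − μ^{n+1}‖` tends to `0` as `n → ∞`. -/
theorem stmt1 {H : Type*} [Group H] [MeasurableSpace H] [MeasurableMul₂ H]
    (μ : Measure H) [IsProbabilityMeasure μ]
    (he : 0 < μ {1}) :
    Tendsto
      (fun n => ((convPow μ n).toSignedMeasure
          - (convPow μ (n + 1)).toSignedMeasure).totalVariation Set.univ)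
      atTop (𝓝 0) := by
  obtain ⟨p, q, ν, hν, hp, hq, hpq, rfl⟩ := exists_eq_smul_dirac_add_smul μ he
  have hexp : ∀ n, convPow (p • Measure.dirac 1 + q • ν) n =
      ∑ j ∈ range (n + 2), binomialWeight p q n j • convPow ν j := fun n => by
    rw [convPow_smul_dirac_add_smul, sum_range_succ _ (n + 1),
      binomialWeight_of_lt p q n.lt_succ_self, zero_smul, add_zero]
  have hTV := fun n => totalVariation_sub_le_of_eq_sum _ _ _ _ _ _ (hexp n)
    (convPow_smul_dirac_add_smul p q ν (n + 1))
  have hlim : Tendsto (fun n => ∑ j ∈ range (n + 2),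
      (nndist (binomialWeight p q n j) (binomialWeight p q (n + 1) j) : ℝ≥0∞)) atTop (𝓝 0) := by
    simp_rw [← ENNReal.ofNNReal_finsetSum]
    rw [← ENNReal.coe_zero, ENNReal.tendsto_coe, ← NNReal.tendsto_coe]
    simp only [NNReal.coe_sum, coe_nndist, NNReal.dist_eq, NNReal.coe_binomialWeight,
      NNReal.coe_zero]
    exact tendsto_sum_range_abs_binomialWeight_sub_succ (p := (p : ℝ)) (q := q) hp hq
        (by exact_mod_cast hpq)
  refine tendsto_of_tendsto_of_tendsto_of_le_of_le tendsto_const_nhds hlim (fun _ => zero_le)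
    fun n => (hTV n Set.univ).trans_eq ?_
  simp [Measure.coe_finsetSum]
end

section
/- Let 0 < p < 1 and set q = 1 − p. Then Σ_{i=0}^{n+1} |C(n,i) p^i q^{n−i} − C(n+1,i) p^i q^{n+1−i}| tends to 0 as n → ∞ (with the convention C(n,i) = 0 for i > n). Equivalently, the total variation distance between the binomial distributions with parameters (n,p) and (n+1,p) tends to 0 as n → ∞. -/
open Filter Topology Finset

/-!
Write `b n i = C(n,i) pⁱ q^(n-i)`. Pascal's identity `C(n,i) (n+1) = C(n+1,i) (n+1-i)` gives
`b n i - b (n+1) i = b (n+1) i · ((n+1)p - i) / ((n+1)q)`, so the sum is the mean absolute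
deviation of a `Bin(n+1,p)` variable divided by `(n+1)q`. By Cauchy–Schwarz the mean absolute
deviation is at most the standard deviation `√((n+1)pq)`, so the sum is at most
`√(p / ((n+1)q)) → 0`.
-/

section Binomial

variable {R : Type*} [CommRing R]

theorem sum_choose_mul_pow_mul_one_sub_pow (x : R) (n : ℕ) :
    ∑ i ∈ range (n + 1), (n.choose i : R) * x ^ i * (1 - x) ^ (n - i) = 1 := by
  simpa [bernsteinPolynomial, Polynomial.eval_finsetSum] using
    congr(Polynomial.eval x $(bernsteinPolynomial.sum R n))

theorem sum_sq_sub_mul_choose_mul_pow_mul_one_sub_pow (x : R) (n : ℕ) :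
    ∑ i ∈ range (n + 1), ((n : R) * x - i) ^ 2 * ((n.choose i : R) * x ^ i * (1 - x) ^ (n - i))
      = n * x * (1 - x) := by
  simpa [bernsteinPolynomial, Polynomial.eval_finsetSum] using
    congr(Polynomial.eval x $(bernsteinPolynomial.variance R n))

theorem succ_mul_mul_sub_choose_succ_mul_pow {p q : R} (h : p + q = 1) {n i : ℕ}
    (hi : i ≤ n + 1) :
    ((n + 1) * q) * ((n.choose i : R) * p ^ i * q ^ (n - i)
        - ((n + 1).choose i : R) * p ^ i * q ^ (n + 1 - i))
      = ((n + 1).choose i : R) * p ^ i * q ^ (n + 1 - i) * ((n + 1) * p - i) := by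
  rcases hi.lt_or_eq with hi | rfl
  · have hc : (n.choose i : R) * (n + 1) = ((n + 1).choose i : R) * (n + 1 - i) := by
      have := congrArg (Nat.cast : ℕ → R) (Nat.choose_mul_succ_eq n i)
      push_cast [Nat.cast_sub hi.le] at this
      exact this
    rw [show n + 1 - i = n - i + 1 by omega, pow_succ]
    linear_combination (p ^ i * q ^ (n - i) * q) * hc
      - (((n + 1).choose i : R) * p ^ i * q ^ (n - i) * q * (n + 1)) * h
  · simp only [Nat.choose_succ_self, Nat.choose_self, Nat.sub_self, pow_zero]
    push_cast
    linear_combination (-(n + 1 : R) * p ^ (n + 1)) * h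

end Binomial

theorem sum_abs_sub_mul_choose_mul_pow_mul_one_sub_pow_le {x : ℝ} (hx0 : 0 ≤ x) (hx1 : x ≤ 1)
    (n : ℕ) :
    ∑ i ∈ range (n + 1), |(n : ℝ) * x - i| * ((n.choose i : ℝ) * x ^ i * (1 - x) ^ (n - i))
      ≤ √(n * x * (1 - x)) := by
  have hw : ∀ i ∈ range (n + 1), 0 ≤ (n.choose i : ℝ) * x ^ i * (1 - x) ^ (n - i) :=
    fun i _ => by have := sub_nonneg.2 hx1; positivity
  refine (le_abs_self _).trans (Real.abs_le_sqrt ?_)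
  calc (∑ i ∈ range (n + 1),
          |(n : ℝ) * x - i| * ((n.choose i : ℝ) * x ^ i * (1 - x) ^ (n - i))) ^ 2
      ≤ (∑ i ∈ range (n + 1), (n.choose i : ℝ) * x ^ i * (1 - x) ^ (n - i)) *
          ∑ i ∈ range (n + 1),
            ((n : ℝ) * x - i) ^ 2 * ((n.choose i : ℝ) * x ^ i * (1 - x) ^ (n - i)) :=
        sum_sq_le_sum_mul_sum_of_sq_le_mul _ hw
          (fun i hi => mul_nonneg (sq_nonneg _) (hw i hi))
          (fun i _ => by rw [mul_pow, sq_abs]; exact le_of_eq (by ring))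
    _ = n * x * (1 - x) := by
        rw [sum_choose_mul_pow_mul_one_sub_pow, sum_sq_sub_mul_choose_mul_pow_mul_one_sub_pow,
          one_mul]

theorem sum_abs_sub_choose_succ_mul_pow_le {p : ℝ} (hp0 : 0 ≤ p) (hp1 : p < 1) (n : ℕ) :
    ∑ i ∈ range (n + 2), |(n.choose i : ℝ) * p ^ i * (1 - p) ^ (n - i)
        - ((n + 1).choose i : ℝ) * p ^ i * (1 - p) ^ (n + 1 - i)|
      ≤ √(p / ((n + 1) * (1 - p))) := by
  have hq : 0 < 1 - p := by linarith
  set c : ℝ := (n + 1) * (1 - p)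
  have hc : 0 < c := by positivity
  have hterm : ∀ i ∈ range (n + 2), |(n.choose i : ℝ) * p ^ i * (1 - p) ^ (n - i)
        - ((n + 1).choose i : ℝ) * p ^ i * (1 - p) ^ (n + 1 - i)|
      = |((n + 1 : ℕ) : ℝ) * p - i|
          * (((n + 1).choose i : ℝ) * p ^ i * (1 - p) ^ (n + 1 - i)) / c := by
    intro i hi
    rw [eq_div_iff hc.ne', ← abs_of_pos hc, ← abs_mul, mul_comm _ c,
      succ_mul_mul_sub_choose_succ_mul_pow (add_sub_cancel p 1)
        (Nat.lt_succ_iff.1 (mem_range.1 hi)),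
      abs_mul, abs_of_nonneg (by positivity), mul_comm]
    push_cast
    ring
  have hmad := sum_abs_sub_mul_choose_mul_pow_mul_one_sub_pow_le hp0 hp1.le (n + 1)
  rw [sum_congr rfl hterm, ← sum_div]
  calc _ ≤ √(((n + 1 : ℕ) : ℝ) * p * (1 - p)) / c := div_le_div_of_nonneg_right hmad hc.le
    _ = √(p / c) := by
      rw [show p / c = ((n + 1 : ℕ) : ℝ) * p * (1 - p) / c ^ 2 by push_cast; field_simp; ring,
        Real.sqrt_div' _ (sq_nonneg c), Real.sqrt_sq hc.le]

/-- For `0 < p < 1` and `q = 1 − p`, the total variation distance between the binomial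
distributions with parameters `(n,p)` and `(n+1,p)`, namely
`Σ_{i=0}^{n+1} |C(n,i) p^i q^{n−i} − C(n+1,i) p^i q^{n+1−i}|`, tends to `0` as `n → ∞`
(with the convention `C(n,i) = 0` for `i > n`, automatic for `Nat.choose`). -/
theorem stmt7 (p q : ℝ) (hp : 0 < p) (hp1 : p < 1) (hq : q = 1 - p) :
    Tendsto (fun n : ℕ =>
        ∑ i ∈ Finset.range (n + 2),
          |(n.choose i : ℝ) * p ^ i * q ^ (n - i)
            - ((n + 1).choose i : ℝ) * p ^ i * q ^ (n + 1 - i)|)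
      atTop (𝓝 0) := by
  subst hq
  refine squeeze_zero (fun n => sum_nonneg fun i _ => abs_nonneg _)
    (sum_abs_sub_choose_succ_mul_pow_le hp.le hp1) ?_
  have hq : 0 < 1 - p := by linarith
  have hlim : Tendsto (fun n : ℕ => p / ((n + 1) * (1 - p))) atTop (𝓝 0) :=
    tendsto_const_nhds.div_atTop <|
      (tendsto_atTop_add_const_right _ 1 tendsto_natCast_atTop_atTop).atTop_mul_const hq
  simpa [Function.comp_def] using (Real.continuous_sqrt.tendsto 0).comp hlim
end
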